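/- Assume (φ1)–(φ3), let V(t) = Φ(|t² − α²|), and let q be a heteroclinic solution of problem (P). If l − 1 > 1, then α·tanh(αt/(m−1)) ≤ q(t) ≤ α·tanh(αt) for all t ≥ 0. -/

import Mathlib

/-!
Multiplying the equation by `q'` shows that the energy `φ(|q'|) q'² - Φ(q') - V(q)` is constant;
it tends to `0` along a sequence of times going to `+∞`, so it vanishes. Integrating the bounds
`(l - 1) φ ≤ (φ(t) t)' ≤ (m - 1) φ` gives `l Φ(x) ≤ φ(|x|) x² ≤ m Φ(x)`, hence
`(l - 1) Φ(q') ≤ Φ(q² - α²) ≤ (m - 1) Φ(q')`. As `l - 1 > 1` and `Φ` is even and increasing on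
`[0, ∞)`, the first inequality gives `|q'| ≤ |q² - α²|`; by Gronwall `q²` never reaches `α²`, so
`q² < α²`, and then `q'` cannot vanish (the energy identity would give `Φ(q² - α²) = 0`), so
`q' > 0` by Darboux. Convexity of `Φ` turns the second inequality into
`q' ≥ (α² - q²) / (m - 1)`. Finally `w = artanh (q / α)` satisfies `w' = α q' / (α² - q²)`,
so `α / (m - 1) ≤ w' ≤ α`, and integrating from `w(0) = 0` gives the two `tanh` bounds.
-/

open Real Filter Set MeasureTheory

noncomputable def Phi (φ : ℝ → ℝ) (t : ℝ) : ℝ := ∫ s in (0:ℝ)..|t|, s * φ s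

def IsClassicalSolution (φ V q : ℝ → ℝ) : Prop :=
  Differentiable ℝ q ∧
  ∀ t : ℝ, HasDerivAt
    (fun s => if deriv q s = 0 then 0 else φ |deriv q s| * deriv q s)
    (deriv V (q t)) t

def IsHeteroclinic (φ V : ℝ → ℝ) (α : ℝ) (q : ℝ → ℝ) : Prop :=
  IsClassicalSolution φ V q ∧ Differentiable ℝ (deriv q) ∧ Continuous (deriv q) ∧
  q 0 = 0 ∧ Tendsto q atTop (nhds α) ∧ Tendsto q atBot (nhds (-α))

open scoped Topology

lemma Real.hasDerivAt_artanh {x : ℝ} (hx : x ∈ Ioo (-1) 1) :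
    HasDerivAt artanh (1 / (1 - x ^ 2)) x := by
  have h1 : 0 < 1 + x := by linarith [hx.1]
  have h2 : 0 < 1 - x := by linarith [hx.2]
  have heq : (fun y => (log (1 + y) - log (1 - y)) / 2) =ᶠ[𝓝 x] artanh := by
    filter_upwards [Ioo_mem_nhds hx.1 hx.2] with y hy
    rw [artanh_eq_half_log (Ioo_subset_Icc_self hy),
      log_div (by linarith [hy.1]) (by linarith [hy.2])]
    ring
  have hd := ((((hasDerivAt_id' x).const_add 1).log h1.ne').sub
    (((hasDerivAt_id' x).const_sub 1).log h2.ne')).div_const 2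
  refine (hd.congr_of_eventuallyEq heq.symm).congr_deriv ?_
  have h3 : 1 - x ^ 2 ≠ 0 := by nlinarith
  field_simp
  ring

lemma le_tanh_iff_artanh_le {x : ℝ} (hx : x ∈ Ioo (-1) 1) (y : ℝ) :
    x ≤ tanh y ↔ artanh x ≤ y := by
  rw [← artanh_le_artanh_iff hx ⟨neg_one_lt_tanh y, tanh_lt_one y⟩, artanh_tanh]

lemma tanh_le_iff_le_artanh {x : ℝ} (hx : x ∈ Ioo (-1) 1) (y : ℝ) :
    tanh y ≤ x ↔ y ≤ artanh x := by
  rw [← artanh_le_artanh_iff ⟨neg_one_lt_tanh y, tanh_lt_one y⟩ hx, artanh_tanh]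

lemma div_mem_Ioo_of_sq_lt_sq {x α : ℝ} (hα : 0 < α) (hx : x ^ 2 < α ^ 2) :
    x / α ∈ Ioo (-1) 1 := by
  rw [mem_Ioo, lt_div_iff₀ hα, div_lt_iff₀ hα]
  have := abs_lt_of_sq_lt_sq' hx hα.le
  constructor <;> linarith

section Comparison

variable {q : ℝ → ℝ} {α k : ℝ}

lemma hasDerivAt_artanh_div {q' t : ℝ} (hα : 0 < α) (hq : HasDerivAt q q' t)
    (hsq : q t ^ 2 < α ^ 2) :
    HasDerivAt (fun s => artanh (q s / α)) (α * q' / (α ^ 2 - q t ^ 2)) t := by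
  refine ((hasDerivAt_artanh (div_mem_Ioo_of_sq_lt_sq hα hsq)).comp t
    (hq.div_const α)).congr_deriv ?_
  have : α ^ 2 - q t ^ 2 ≠ 0 := by linarith
  field_simp

lemma le_mul_tanh_of_deriv_le (hα : 0 < α) (hk : 0 < k) (hq : Differentiable ℝ q)
    (hq0 : q 0 = 0) (hsq : ∀ t, q t ^ 2 < α ^ 2) (hbd : ∀ t, deriv q t ≤ (α ^ 2 - q t ^ 2) / k)
    {t : ℝ} (ht : 0 ≤ t) : q t ≤ α * tanh (α * t / k) := by
  have hw := fun s => hasDerivAt_artanh_div hα (hq s).hasDerivAt (hsq s)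
  have hw' : ∀ s, deriv (fun u => artanh (q u / α)) s ≤ α / k := by
    intro s
    have h := (le_div_iff₀ hk).1 (hbd s)
    rw [(hw s).deriv, div_le_div_iff₀ (by linarith [hsq s]) hk]
    nlinarith
  have h := image_sub_le_mul_sub_of_deriv_le (fun s => (hw s).differentiableAt) hw' ht
  simp only [hq0, zero_div, artanh_zero, sub_zero] at h
  have h' := (le_tanh_iff_artanh_le (div_mem_Ioo_of_sq_lt_sq hα (hsq t)) _).2
    (h.trans_eq (by ring) : artanh (q t / α) ≤ α * t / k)
  rwa [div_le_iff₀' hα] at h'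

lemma mul_tanh_le_of_le_deriv (hα : 0 < α) (hk : 0 < k) (hq : Differentiable ℝ q)
    (hq0 : q 0 = 0) (hsq : ∀ t, q t ^ 2 < α ^ 2) (hbd : ∀ t, (α ^ 2 - q t ^ 2) / k ≤ deriv q t)
    {t : ℝ} (ht : 0 ≤ t) : α * tanh (α * t / k) ≤ q t := by
  have hw := fun s => hasDerivAt_artanh_div hα (hq s).hasDerivAt (hsq s)
  have hw' : ∀ s, α / k ≤ deriv (fun u => artanh (q u / α)) s := by
    intro s
    have h := (div_le_iff₀ hk).1 (hbd s)
    rw [(hw s).deriv, div_le_div_iff₀ hk (by linarith [hsq s])]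
    nlinarith
  have h := mul_sub_le_image_sub_of_le_deriv (fun s => (hw s).differentiableAt) hw' ht
  simp only [hq0, zero_div, artanh_zero, sub_zero] at h
  have h' := (tanh_le_iff_le_artanh (div_mem_Ioo_of_sq_lt_sq hα (hsq t)) _).2
    ((by ring : α * t / k = α / k * t).trans_le h)
  rwa [le_div_iff₀' hα] at h'

end Comparison

lemma eq_zero_of_abs_deriv_le_mul_abs {f f' : ℝ → ℝ} {K a b : ℝ}
    (hf : ∀ s, HasDerivAt f (f' s) s) (hbd : ∀ s ∈ uIcc a b, |f' s| ≤ K * |f s|)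
    (ha : f a = 0) : f b = 0 := by
  wlog hab : a ≤ b generalizing f f' a b
  · have hneg := fun s => ((hf (-s)).comp s (hasDerivAt_neg s)).congr_deriv (mul_neg_one _)
    have h := this (f := fun s => f (-s)) (a := -a) (b := -b) hneg ?_ (by simpa using ha)
      (by linarith)
    · simpa using h
    · intro s hs
      rw [abs_neg]
      exact hbd (-s) (by rw [mem_uIcc] at hs ⊢; grind)
  have hb := norm_le_gronwallBound_of_norm_deriv_right_le (δ := 0) (ε := 0) (K := K)
    (fun s _ => (hf s).continuousAt.continuousWithinAt) (fun s _ => (hf s).hasDerivWithinAt)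
    (by simp [ha]) (fun s hs => by simpa using hbd s (Icc_subset_uIcc (Ico_subset_Icc_self hs)))
    b (right_mem_Icc.2 hab)
  rw [gronwallBound_ε0_δ0] at hb
  exact norm_le_zero_iff.1 hb

lemma sq_lt_sq_of_abs_deriv_le {q : ℝ → ℝ} {α : ℝ} (hq : Differentiable ℝ q) (hq0 : q 0 = 0)
    (hα : α ≠ 0) (hbd : ∀ t, |deriv q t| ≤ |q t ^ 2 - α ^ 2|) (t : ℝ) : q t ^ 2 < α ^ 2 := by
  have hne : ∀ t, q t ^ 2 - α ^ 2 ≠ 0 := by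
    intro t ht
    obtain ⟨C, hC⟩ := (isCompact_uIcc (a := t) (b := 0)).exists_bound_of_continuousOn
      hq.continuous.continuousOn
    have h0 := eq_zero_of_abs_deriv_le_mul_abs (f := fun s => q s ^ 2 - α ^ 2)
      (f' := fun s => 2 * q s * deriv q s) (K := 2 * C) (b := 0)
      (fun s => by simpa using ((hq s).hasDerivAt.pow 2).sub_const (α ^ 2)) ?_ ht
    · simp [hq0, hα] at h0
    · intro s hs
      have hqs : |q s| ≤ C := hC s hs
      have hC0 : 0 ≤ C := (abs_nonneg _).trans hqs
      calc |2 * q s * deriv q s| = 2 * |q s| * |deriv q s| := by simp [abs_mul]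
        _ ≤ 2 * C * |q s ^ 2 - α ^ 2| :=
          mul_le_mul (by linarith) (hbd s) (abs_nonneg _) (by linarith)
  by_contra! h
  obtain ⟨s, -, hs⟩ := intermediate_value_uIcc (a := 0) (b := t)
    (hq.continuous.pow 2 |>.sub continuous_const).continuousOn
    (show (0 : ℝ) ∈ uIcc (q 0 ^ 2 - α ^ 2) (q t ^ 2 - α ^ 2) by
      rw [hq0, mem_uIcc]; left; constructor <;> nlinarith)
  exact hne s hs

lemma deriv_pos_of_forall_ne_zero {q : ℝ → ℝ} {a : ℝ} (hq : Differentiable ℝ q)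
    (hne : ∀ t, deriv q t ≠ 0) (hlim : Tendsto q atTop (𝓝 a)) (ha : q 0 < a) (t : ℝ) :
    0 < deriv q t := by
  rcases hasDerivWithinAt_forall_lt_or_forall_gt_of_forall_ne convex_univ
    (fun s _ => (hq s).hasDerivAt.hasDerivWithinAt) (fun s _ => hne s) with hneg | hpos
  · have hanti := strictAnti_of_deriv_neg fun s => hneg s trivial
    have : a ≤ q 0 := le_of_tendsto hlim
      (eventually_atTop.2 ⟨0, fun s hs => hanti.antitone hs⟩)
    linarith
  · exact hpos t trivial

lemma exists_seq_tendsto_deriv_tendsto_zero {q : ℝ → ℝ} {a : ℝ} (hq : Differentiable ℝ q)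
    (hlim : Tendsto q atTop (𝓝 a)) :
    ∃ c : ℕ → ℝ, Tendsto c atTop atTop ∧ Tendsto (fun n => deriv q (c n)) atTop (𝓝 0) := by
  have hmvt (n : ℕ) : ∃ c ∈ Ioo (n : ℝ) (n + 1), deriv q c = q (n + 1) - q n := by
    obtain ⟨c, hc, hc'⟩ := exists_deriv_eq_slope q (lt_add_one (n : ℝ))
      hq.continuous.continuousOn hq.differentiableOn
    exact ⟨c, hc, by rw [hc', add_sub_cancel_left, div_one]⟩
  choose c hc hc' using hmvt
  have hn := tendsto_natCast_atTop_atTop (R := ℝ)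
  refine ⟨c, tendsto_atTop_mono (fun n => (hc n).1.le) hn, ?_⟩
  simp only [hc']
  simpa using (hlim.comp (tendsto_atTop_add_const_right atTop 1 hn)).sub (hlim.comp hn)

section Phi

variable {φ : ℝ → ℝ}

lemma Phi_abs (φ : ℝ → ℝ) (t : ℝ) : Phi φ |t| = Phi φ t := by simp [Phi]

lemma Phi_neg (φ : ℝ → ℝ) (t : ℝ) : Phi φ (-t) = Phi φ t := by simp [Phi]

lemma Phi_zero (φ : ℝ → ℝ) : Phi φ 0 = 0 := by simp [Phi]

lemma Phi_eq_integral (φ : ℝ → ℝ) (t : ℝ) : Phi φ t = ∫ s in (0 : ℝ)..t, φ |s| * s := by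
  have hcongr : ∀ u, 0 ≤ u → ∫ s in (0 : ℝ)..u, s * φ s = ∫ s in (0 : ℝ)..u, φ |s| * s :=
    fun u hu => intervalIntegral.integral_congr fun s hs => by
      rw [uIcc_of_le hu] at hs
      rw [abs_of_nonneg hs.1, mul_comm]
  rcases le_total 0 t with ht | ht
  · rw [Phi, abs_of_nonneg ht, hcongr t ht]
  · have hodd := intervalIntegral.integral_comp_neg (a := 0) (b := t) fun s => φ |s| * s
    simp only [abs_neg, mul_neg, intervalIntegral.integral_neg, neg_zero] at hodd
    rw [Phi, abs_of_nonpos ht, hcongr (-t) (by linarith), intervalIntegral.integral_symm, ← hodd,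
      neg_neg]

lemma tendsto_mul_self_nhdsGT_zero {c δ r : ℝ} (hpos : ∀ t > 0, 0 < φ t) (hδ : 0 < δ)
    (hr : 1 < r) (hle : ∀ t : ℝ, 0 < t → t ≤ δ → φ t * t ≤ c * t ^ (r - 1)) :
    Tendsto (fun t => φ t * t) (𝓝[>] 0) (𝓝 0) := by
  have hrpow : Tendsto (fun t : ℝ => c * t ^ (r - 1)) (𝓝[>] 0) (𝓝 0) := by
    simpa [zero_rpow (by linarith : r - 1 ≠ 0)] using
      ((continuousAt_rpow_const 0 (r - 1) (Or.inr (by linarith))).const_mul c).tendsto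
        |>.mono_left nhdsWithin_le_nhds
  refine squeeze_zero' ?_ ?_ hrpow
  · filter_upwards [self_mem_nhdsWithin] with t ht using (mul_pos (hpos t ht) ht).le
  · filter_upwards [self_mem_nhdsWithin, Ioo_mem_nhdsGT hδ] with t ht ht' using
      hle t ht ht'.2.le

lemma continuous_abs_mul (hφ : ContinuousOn φ (Ioi 0))
    (h0 : Tendsto (fun t => φ t * t) (𝓝[>] 0) (𝓝 0)) : Continuous fun x => φ |x| * x := by
  refine continuous_iff_continuousAt.2 fun x => ?_
  rcases eq_or_ne x 0 with rfl | hx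
  · have hG : ContinuousWithinAt (fun t => φ t * t) (Ici 0) 0 := by
      rw [← Ioi_insert, continuousWithinAt_insert_self, ContinuousWithinAt]
      simpa using h0
    have habs : Tendsto (fun x => φ |x| * |x|) (𝓝 0) (𝓝 0) := by
      simpa [Function.comp_def] using hG.tendsto.comp
        (tendsto_nhdsWithin_of_tendsto_nhds_of_eventually_within _
          (continuous_abs.tendsto' 0 0 abs_zero) (Eventually.of_forall abs_nonneg))
    rw [ContinuousAt, abs_zero, mul_zero, tendsto_zero_iff_norm_tendsto_zero]
    simpa [abs_mul, abs_abs] using habs.norm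
  · exact ((hφ.continuousAt (Ioi_mem_nhds (abs_pos.2 hx))).comp continuous_abs.continuousAt).mul
      continuousAt_id

lemma hasDerivAt_Phi (hg : Continuous fun x => φ |x| * x) (t : ℝ) :
    HasDerivAt (Phi φ) (φ |t| * t) t := by
  rw [funext (Phi_eq_integral φ)]
  exact (hg.integral_hasStrictDerivAt 0 t).hasDerivAt

lemma continuous_Phi (hg : Continuous fun x => φ |x| * x) : Continuous (Phi φ) :=
  continuous_iff_continuousAt.2 fun t => (hasDerivAt_Phi hg t).continuousAt

lemma Phi_strictMonoOn (hg : Continuous fun x => φ |x| * x) (hpos : ∀ t > 0, 0 < φ t) :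
    StrictMonoOn (Phi φ) (Ici 0) := by
  refine strictMonoOn_of_deriv_pos (convex_Ici 0) (continuous_Phi hg).continuousOn fun t ht => ?_
  rw [interior_Ici, mem_Ioi] at ht
  rw [(hasDerivAt_Phi hg t).deriv, abs_of_pos ht]
  exact mul_pos (hpos t ht) ht

lemma Phi_le_Phi_iff (hg : Continuous fun x => φ |x| * x) (hpos : ∀ t > 0, 0 < φ t) {x y : ℝ} :
    Phi φ x ≤ Phi φ y ↔ |x| ≤ |y| := by
  rw [← Phi_abs φ x, ← Phi_abs φ y]
  exact (Phi_strictMonoOn hg hpos).le_iff_le (abs_nonneg x) (abs_nonneg y)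

lemma Phi_nonneg (hg : Continuous fun x => φ |x| * x) (hpos : ∀ t > 0, 0 < φ t) (x : ℝ) :
    0 ≤ Phi φ x := by
  simpa [Phi_zero] using (Phi_le_Phi_iff hg hpos (x := 0) (y := x)).2 (by simp)

lemma Phi_pos (hg : Continuous fun x => φ |x| * x) (hpos : ∀ t > 0, 0 < φ t) {x : ℝ}
    (hx : x ≠ 0) : 0 < Phi φ x := by
  refine lt_of_not_ge fun h => hx ?_
  rw [← Phi_zero φ, Phi_le_Phi_iff hg hpos, abs_zero] at h
  exact abs_nonpos_iff.1 h

lemma Phi_mul_le (hg : Continuous fun x => φ |x| * x)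
    (hmono : MonotoneOn (fun t => φ t * t) (Ioi 0)) {c u : ℝ} (hc₀ : 0 ≤ c) (hc₁ : c ≤ 1)
    (hu : 0 ≤ u) : Phi φ (c * u) ≤ c * Phi φ u := by
  have hconv : ConvexOn ℝ (Ici 0) (Phi φ) := by
    refine MonotoneOn.convexOn_of_deriv (convex_Ici 0) (continuous_Phi hg).continuousOn
      (fun t _ => (hasDerivAt_Phi hg t).differentiableAt.differentiableWithinAt) ?_
    rw [interior_Ici]
    refine hmono.congr fun t ht => ?_
    rw [(hasDerivAt_Phi hg t).deriv, abs_of_pos ht]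
  simpa [Phi_zero] using hconv.2 (mem_Ici.2 hu) self_mem_Ici hc₀ (sub_nonneg.2 hc₁) (by ring)

end Phi

section Growth

variable {φ : ℝ → ℝ}

lemma hasDerivAt_mul_sq_sub_mul_Phi (hg : Continuous fun x => φ |x| * x) {t : ℝ} (ht : 0 < t)
    (hG : DifferentiableAt ℝ (fun s => φ s * s) t) (c : ℝ) :
    HasDerivAt (fun s => φ s * s ^ 2 - c * Phi φ s)
      (t * (deriv (fun s => φ s * s) t - (c - 1) * φ t)) t := by
  have hfun : (fun s => φ s * s ^ 2 - c * Phi φ s) = fun s => φ s * s * s - c * Phi φ s := by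
    ext s
    ring
  rw [hfun]
  refine ((hG.hasDerivAt.mul (hasDerivAt_id' t)).sub
    ((hasDerivAt_Phi hg t).const_mul c)).congr_deriv ?_
  rw [abs_of_pos ht]
  ring

lemma continuousOn_mul_sq_sub_mul_Phi (hg : Continuous fun x => φ |x| * x) (c : ℝ) :
    ContinuousOn (fun s => φ s * s ^ 2 - c * Phi φ s) (Ici 0) := by
  have hΦ := continuous_Phi hg
  have h : Continuous fun s => φ |s| * s * s - c * Phi φ s := by fun_prop
  refine h.continuousOn.congr fun s hs => ?_
  rw [mem_Ici] at hs
  simp only [abs_of_nonneg hs]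
  ring

lemma mul_Phi_le_mul_sq {l : ℝ} (hg : Continuous fun x => φ |x| * x) (hpos : ∀ t > 0, 0 < φ t)
    (hG : ∀ t > 0, DifferentiableAt ℝ (fun s => φ s * s) t)
    (hl : ∀ t > 0, l - 1 ≤ deriv (fun s => φ s * s) t / φ t) (x : ℝ) :
    l * Phi φ x ≤ φ |x| * x ^ 2 := by
  wlog hx : 0 ≤ x generalizing x
  · simpa [Phi_neg] using this (-x) (by linarith)
  have hmono : MonotoneOn (fun s => φ s * s ^ 2 - l * Phi φ s) (Ici 0) := by
    refine monotoneOn_of_deriv_nonneg (convex_Ici 0) (continuousOn_mul_sq_sub_mul_Phi hg l)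
      (fun t ht => ?_) fun t ht => ?_ <;> rw [interior_Ici, mem_Ioi] at ht
    · exact (hasDerivAt_mul_sq_sub_mul_Phi hg ht (hG t ht) l).differentiableAt
        |>.differentiableWithinAt
    · rw [(hasDerivAt_mul_sq_sub_mul_Phi hg ht (hG t ht) l).deriv]
      have := (le_div_iff₀ (hpos t ht)).1 (hl t ht)
      exact mul_nonneg ht.le (by linarith)
  have := hmono self_mem_Ici hx hx
  simp only [Phi_zero, abs_of_nonneg hx] at this ⊢
  linarith

lemma mul_sq_le_mul_Phi {m : ℝ} (hg : Continuous fun x => φ |x| * x) (hpos : ∀ t > 0, 0 < φ t)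
    (hG : ∀ t > 0, DifferentiableAt ℝ (fun s => φ s * s) t)
    (hm : ∀ t > 0, deriv (fun s => φ s * s) t / φ t ≤ m - 1) (x : ℝ) :
    φ |x| * x ^ 2 ≤ m * Phi φ x := by
  wlog hx : 0 ≤ x generalizing x
  · simpa [Phi_neg] using this (-x) (by linarith)
  have hanti : AntitoneOn (fun s => φ s * s ^ 2 - m * Phi φ s) (Ici 0) := by
    refine antitoneOn_of_deriv_nonpos (convex_Ici 0) (continuousOn_mul_sq_sub_mul_Phi hg m)
      (fun t ht => ?_) fun t ht => ?_ <;> rw [interior_Ici, mem_Ioi] at ht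
    · exact (hasDerivAt_mul_sq_sub_mul_Phi hg ht (hG t ht) m).differentiableAt
        |>.differentiableWithinAt
    · rw [(hasDerivAt_mul_sq_sub_mul_Phi hg ht (hG t ht) m).deriv]
      have := (div_le_iff₀ (hpos t ht)).1 (hm t ht)
      exact mul_nonpos_of_nonneg_of_nonpos ht.le (by linarith)
  have := hanti self_mem_Ici hx hx
  simp only [Phi_zero, abs_of_nonneg hx] at this ⊢
  linarith

end Growth

lemma IsClassicalSolution.energy_eq {φ V q : ℝ → ℝ} {a : ℝ} (hsol : IsClassicalSolution φ V q)
    (hg : Continuous fun x => φ |x| * x) (hV : Differentiable ℝ V)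
    (hq' : Differentiable ℝ (deriv q)) (hlim : Tendsto q atTop (𝓝 a)) (hVa : V a = 0) (t : ℝ) :
    φ |deriv q t| * deriv q t ^ 2 - Phi φ (deriv q t) = V (q t) := by
  obtain ⟨hq, hflux⟩ := hsol
  set E := fun s => φ |deriv q s| * deriv q s * deriv q s - Phi φ (deriv q s) - V (q s) with hE
  have hflux' (s : ℝ) : HasDerivAt (fun u => φ |deriv q u| * deriv q u) (deriv V (q s)) s :=
    (hflux s).congr_of_eventuallyEq <| Eventually.of_forall fun u => by
      dsimp only
      split_ifs with h <;> simp [h]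
  have hE' (s : ℝ) : HasDerivAt E 0 s :=
    (((hflux' s).mul (hq' s).hasDerivAt).sub ((hasDerivAt_Phi hg _).comp s (hq' s).hasDerivAt)
      |>.sub ((hV (q s)).hasDerivAt.comp s (hq s).hasDerivAt)).congr_deriv (by ring)
  have hconst (s : ℝ) : E s = E t :=
    is_const_of_deriv_eq_zero (fun s => (hE' s).differentiableAt) (fun s => (hE' s).deriv) s t
  obtain ⟨c, hc, hc'⟩ := exists_seq_tendsto_deriv_tendsto_zero hq hlim
  have hlimE : Tendsto (fun n => E (c n)) atTop (𝓝 0) := by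
    have := ((((hg.mul continuous_id).tendsto 0).comp hc').sub
      (((continuous_Phi hg).tendsto 0).comp hc')).sub
      ((hV.continuous.tendsto a).comp (hlim.comp hc))
    simpa [Phi_zero, hVa, Function.comp_def] using this
  simp only [hconst] at hlimE
  have h0 : E t = 0 := tendsto_nhds_unique tendsto_const_nhds hlimE
  simp only [hE] at h0
  linear_combination h0

section EnergyConsequences

variable {φ q : ℝ → ℝ} {α : ℝ}

lemma IsHeteroclinic.energy_eq (hq : IsHeteroclinic φ (fun t => Phi φ |t ^ 2 - α ^ 2|) α q)
    (hg : Continuous fun x => φ |x| * x) (t : ℝ) :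
    φ |deriv q t| * deriv q t ^ 2 - Phi φ (deriv q t) = Phi φ (q t ^ 2 - α ^ 2) := by
  have hV : Differentiable ℝ fun t => Phi φ |t ^ 2 - α ^ 2| := by
    simp only [Phi_abs]
    exact fun x =>
      ((hasDerivAt_Phi hg _).comp x ((hasDerivAt_pow 2 x).sub_const _)).differentiableAt
  obtain ⟨hsol, hq', -, -, hlim, -⟩ := hq
  simpa [Phi_abs] using hsol.energy_eq hg hV hq' hlim (by simp [Phi_zero]) t

lemma abs_deriv_le_of_energy_eq {l : ℝ} (hg : Continuous fun x => φ |x| * x)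
    (hpos : ∀ t > 0, 0 < φ t) (hl : 2 ≤ l) (hlow : ∀ x, l * Phi φ x ≤ φ |x| * x ^ 2)
    (henergy : ∀ t, φ |deriv q t| * deriv q t ^ 2 - Phi φ (deriv q t) = Phi φ (q t ^ 2 - α ^ 2))
    (t : ℝ) : |deriv q t| ≤ |q t ^ 2 - α ^ 2| := by
  rw [← Phi_le_Phi_iff hg hpos]
  nlinarith [hlow (deriv q t), henergy t, Phi_nonneg hg hpos (deriv q t)]

lemma deriv_pos_of_energy_eq (hg : Continuous fun x => φ |x| * x) (hpos : ∀ t > 0, 0 < φ t)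
    (hq : Differentiable ℝ q) (hq0 : q 0 = 0) (hα : 0 < α) (hlim : Tendsto q atTop (𝓝 α))
    (hsq : ∀ t, q t ^ 2 < α ^ 2)
    (henergy : ∀ t, φ |deriv q t| * deriv q t ^ 2 - Phi φ (deriv q t) = Phi φ (q t ^ 2 - α ^ 2))
    (t : ℝ) : 0 < deriv q t := by
  refine deriv_pos_of_forall_ne_zero hq (fun s hs => ?_) hlim (by rwa [hq0]) t
  have h := henergy s
  rw [hs, Phi_zero] at h
  exact (Phi_pos hg hpos (by linarith [hsq s] : q s ^ 2 - α ^ 2 ≠ 0)).ne' (by simpa using h.symm)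

lemma div_le_deriv_of_energy_eq {m : ℝ} (hg : Continuous fun x => φ |x| * x)
    (hpos : ∀ t > 0, 0 < φ t) (hmono : MonotoneOn (fun t => φ t * t) (Ioi 0)) (hm : 1 ≤ m - 1)
    (hup : ∀ x, φ |x| * x ^ 2 ≤ m * Phi φ x) (hsq : ∀ t, q t ^ 2 < α ^ 2)
    (hq' : ∀ t, 0 < deriv q t)
    (henergy : ∀ t, φ |deriv q t| * deriv q t ^ 2 - Phi φ (deriv q t) = Phi φ (q t ^ 2 - α ^ 2))
    (t : ℝ) : (α ^ 2 - q t ^ 2) / (m - 1) ≤ deriv q t := by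
  have hd : 0 ≤ α ^ 2 - q t ^ 2 := by linarith [hsq t]
  have hm₀ : 0 < m - 1 := by linarith
  have hPhi := calc
    Phi φ ((α ^ 2 - q t ^ 2) / (m - 1)) = Phi φ (1 / (m - 1) * (α ^ 2 - q t ^ 2)) := by ring_nf
    _ ≤ 1 / (m - 1) * Phi φ (α ^ 2 - q t ^ 2) :=
      Phi_mul_le hg hmono (by positivity) ((div_le_one hm₀).2 hm) hd
    _ = Phi φ (q t ^ 2 - α ^ 2) / (m - 1) := by rw [← Phi_neg φ (q t ^ 2 - α ^ 2), neg_sub]; ring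
    _ ≤ Phi φ (deriv q t) := by
      rw [div_le_iff₀ hm₀]
      nlinarith [henergy t, hup (deriv q t)]
  rwa [Phi_le_Phi_iff hg hpos, abs_of_nonneg (by positivity), abs_of_pos (hq' t)] at hPhi

end EnergyConsequences

theorem statement5_general (φ : ℝ → ℝ) (l m α : ℝ) (q : ℝ → ℝ)
    (hφC1 : ContDiffOn ℝ 1 φ (Set.Ioi 0))
    (hφpos : ∀ t > 0, 0 < φ t)
    (hφ1 : ∀ t > 0, 0 < deriv (fun s => φ s * s) t)
    (hlm : l ≤ m)
    (hφ2 : ∀ t > 0, l - 1 ≤ deriv (fun s => φ s * s) t / φ t ∧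
      deriv (fun s => φ s * s) t / φ t ≤ m - 1)
    (hφ3 : ∃ c₁ c₂ δ₀ r : ℝ, 0 < c₁ ∧ 0 < c₂ ∧ 0 < δ₀ ∧ 1 < r ∧
      ∀ t : ℝ, 0 < t → t ≤ δ₀ → c₁ * t ^ (r - 1) ≤ φ t * t ∧ φ t * t ≤ c₂ * t ^ (r - 1))
    (hα : 0 < α)
    (hq : IsHeteroclinic φ (fun t => Phi φ |t ^ 2 - α ^ 2|) α q)
    (hcase : 1 < l - 1) :
    ∀ t : ℝ, 0 ≤ t →
      α * Real.tanh (α * t / (m - 1)) ≤ q t ∧ q t ≤ α * Real.tanh (α * t) := by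
  obtain ⟨c₁, c₂, δ₀, r, -, -, hδ₀, hr, hbound⟩ := hφ3
  have hg : Continuous fun x => φ |x| * x := continuous_abs_mul hφC1.continuousOn
    (tendsto_mul_self_nhdsGT_zero hφpos hδ₀ hr fun t ht htδ => (hbound t ht htδ).2)
  have hG : ∀ t > 0, DifferentiableAt ℝ (fun s => φ s * s) t := fun t ht =>
    differentiableAt_of_deriv_ne_zero (hφ1 t ht).ne'
  have hGmono : MonotoneOn (fun s => φ s * s) (Ioi 0) :=
    (strictMonoOn_of_deriv_pos (convex_Ioi 0)
      (fun t ht => (hG t ht).continuousAt.continuousWithinAt) (by rwa [interior_Ioi])).monotoneOn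
  have henergy := hq.energy_eq hg
  obtain ⟨⟨hqd, -⟩, -, -, hq0, hlim, -⟩ := hq
  have hq'_abs := abs_deriv_le_of_energy_eq hg hφpos (by linarith)
    (mul_Phi_le_mul_sq hg hφpos hG fun t ht => (hφ2 t ht).1) henergy
  have hsq := sq_lt_sq_of_abs_deriv_le hqd hq0 hα.ne' hq'_abs
  have hq'_pos := deriv_pos_of_energy_eq hg hφpos hqd hq0 hα hlim hsq henergy
  have hq'_ge := div_le_deriv_of_energy_eq hg hφpos hGmono (by linarith)
    (mul_sq_le_mul_Phi hg hφpos hG fun t ht => (hφ2 t ht).2) hsq hq'_pos henergy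
  have hq'_le (t : ℝ) : deriv q t ≤ (α ^ 2 - q t ^ 2) / 1 := by
    have h := hq'_abs t
    rw [abs_of_pos (hq'_pos t), abs_of_neg (by linarith [hsq t])] at h
    linarith
  intro t ht
  exact ⟨mul_tanh_le_of_le_deriv hα (by linarith) hqd hq0 hsq hq'_ge ht,
    by simpa using le_mul_tanh_of_deriv_le hα one_pos hqd hq0 hsq hq'_le ht⟩

theorem statement5 (φ : ℝ → ℝ) (l m α : ℝ) (q : ℝ → ℝ)
    (hφC1 : ContDiffOn ℝ 1 φ (Set.Ioi 0))
    (hφpos : ∀ t > 0, 0 < φ t)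
    (hφ1 : ∀ t > 0, 0 < deriv (fun s => φ s * s) t)
    (hl : 1 < l) (hlm : l ≤ m)
    (hφ2 : ∀ t > 0, l - 1 ≤ deriv (fun s => φ s * s) t / φ t ∧
      deriv (fun s => φ s * s) t / φ t ≤ m - 1)
    (hφ3 : ∃ c₁ c₂ δ₀ r : ℝ, 0 < c₁ ∧ 0 < c₂ ∧ 0 < δ₀ ∧ 1 < r ∧
      ∀ t : ℝ, 0 < t → t ≤ δ₀ → c₁ * t ^ (r - 1) ≤ φ t * t ∧ φ t * t ≤ c₂ * t ^ (r - 1))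
    (hα : 0 < α)
    (hq : IsHeteroclinic φ (fun t => Phi φ |t ^ 2 - α ^ 2|) α q)
    (hcase : 1 < l - 1) :
    ∀ t : ℝ, 0 ≤ t →
      α * Real.tanh (α * t / (m - 1)) ≤ q t ∧ q t ≤ α * Real.tanh (α * t) :=
  statement5_general φ l m α q hφC1 hφpos hφ1 hlm hφ2 hφ3 hα hq hcase
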